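/- arXiv:1804.03438 — 3 statements merged into one kernel-verified Lean document; each statement's English description precedes it below -/
import Mathlib

section
/- Let H₁ and H₂ be complex Hilbert spaces, T_j a bounded bijective linear operator on H_j and f_j ∈ H_j for j = 1,2, and suppose (T₁,f₁) and (T₂,f₂) are similar via a bounded bijective operator V : H₁ → H₂. Then (T₁ⁿf₁)_{n∈ℤ} is a frame for H₁ if and only if (T₂ⁿf₂)_{n∈ℤ} is a frame for H₂. Moreover, in the affirmative case V is the unique bounded bijective operator with T₂ = V T₁ V⁻¹ and f₂ = V f₁. -/
open MeasureTheory
noncomputable section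

/-- A family `(F n)` is a frame for `H`. -/
def IsFrame {I H : Type*} [NormedAddCommGroup H] [InnerProductSpace ℂ H] (F : I → H) : Prop :=
  ∃ A B : ℝ, 0 < A ∧ 0 < B ∧ ∀ f : H,
    A * ‖f‖ ^ 2 ≤ ∑' n : I, ‖(inner ℂ f (F n) : ℂ)‖ ^ 2 ∧
      ∑' n : I, ‖(inner ℂ f (F n) : ℂ)‖ ^ 2 ≤ B * ‖f‖ ^ 2

/-!
Similarity transports orbits: `V` carries `(T₁ⁿ f₁)` onto `(T₂ⁿ f₂)`. A bounded bijection `V` maps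
frames to frames, since `∑ |⟪g, V fₙ⟫|² = ∑ |⟪V* g, fₙ⟫|²` and `V*` is again a bounded bijection.
For uniqueness, a frame spans a dense subspace (its orthogonal complement is killed by the lower
frame bound), and two intertwiners `W`, `V` with `W f₁ = V f₁` agree on the whole orbit.
-/

open ContinuousLinearMap

theorem ContinuousLinearEquiv.zpow_apply_of_intertwines {R M₁ M₂ : Type*} [Semiring R]
    [TopologicalSpace M₁] [AddCommMonoid M₁] [Module R M₁]
    [TopologicalSpace M₂] [AddCommMonoid M₂] [Module R M₂]
    {T₁ : M₁ ≃L[R] M₁} {T₂ : M₂ ≃L[R] M₂} {V : M₁ ≃L[R] M₂}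
    (hV : ∀ x, T₂ (V x) = V (T₁ x)) (n : ℤ) (x : M₁) :
    (T₂ ^ n) (V x) = V ((T₁ ^ n) x) := by
  have hV_symm : ∀ x, T₂.symm (V x) = V (T₁.symm x) := fun x => by
    rw [T₂.symm_apply_eq, hV, T₁.apply_symm_apply]
  induction n using Int.induction_on generalizing x with
  | zero => rfl
  | succ n ih =>
    rw [zpow_add_one, zpow_add_one]
    exact (congrArg (T₂ ^ (n : ℤ)) (hV x)).trans (ih _)
  | pred n ih =>
    rw [zpow_sub_one, zpow_sub_one]
    exact (congrArg (T₂ ^ (-n : ℤ)) (hV_symm x)).trans (ih _)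

section Frame

variable {I H₁ H₂ : Type*} [NormedAddCommGroup H₁] [InnerProductSpace ℂ H₁]
  [NormedAddCommGroup H₂] [InnerProductSpace ℂ H₂]

theorem IsFrame.of_inner_eq_inner_equiv {F : I → H₁} {G : I → H₂} (hF : IsFrame F)
    (E : H₂ ≃L[ℂ] H₁) (hE : ∀ g n, inner ℂ g (G n) = inner ℂ (E g) (F n)) : IsFrame G := by
  obtain ⟨A, B, hA, hB, hF⟩ := hF
  obtain ⟨C, hC, hEC⟩ := (E : H₂ →L[ℂ] H₁).bound
  obtain ⟨D, hD, hED⟩ := (E.symm : H₁ →L[ℂ] H₂).bound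
  refine ⟨A / D ^ 2, B * C ^ 2, by positivity, by positivity, fun g => ?_⟩
  have hlower : ‖g‖ ^ 2 ≤ D ^ 2 * ‖E g‖ ^ 2 := by
    rw [← mul_pow]
    gcongr
    simpa using hED (E g)
  have hupper : ‖E g‖ ^ 2 ≤ C ^ 2 * ‖g‖ ^ 2 := by
    rw [← mul_pow]
    gcongr
    exact hEC g
  simp only [hE g]
  obtain ⟨hFA, hFB⟩ := hF (E g)
  constructor
  · calc A / D ^ 2 * ‖g‖ ^ 2 ≤ A / D ^ 2 * (D ^ 2 * ‖E g‖ ^ 2) := by gcongr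
      _ = A * ‖E g‖ ^ 2 := by field_simp
      _ ≤ _ := hFA
  · calc _ ≤ B * ‖E g‖ ^ 2 := hFB
      _ ≤ B * (C ^ 2 * ‖g‖ ^ 2) := by gcongr
      _ = B * C ^ 2 * ‖g‖ ^ 2 := by ring

theorem IsFrame.map [CompleteSpace H₁] [CompleteSpace H₂] {F : I → H₁} (hF : IsFrame F)
    (V : H₁ ≃L[ℂ] H₂) : IsFrame fun n => V (F n) := by
  let V' : H₁ →L[ℂ] H₂ := V
  let Vadj : H₂ ≃L[ℂ] H₁ := .equivOfInverse' (adjoint V') (adjoint (V.symm : H₂ →L[ℂ] H₁))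
    (by simp [V', ← adjoint_comp, adjoint_id]) (by simp [V', ← adjoint_comp, adjoint_id])
  exact hF.of_inner_eq_inner_equiv Vadj fun g n => (adjoint_inner_left V' (F n) g).symm

theorem IsFrame.dense_span [CompleteSpace H₁] {F : I → H₁} (hF : IsFrame F) :
    Dense (Submodule.span ℂ (Set.range F) : Set H₁) := by
  obtain ⟨A, B, hA, -, hF⟩ := hF
  rw [Submodule.dense_iff_topologicalClosure_eq_top, Submodule.topologicalClosure_eq_top_iff,
    Submodule.eq_bot_iff]
  intro x hx
  have horth : ∀ n, inner ℂ x (F n) = 0 := fun n =>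
    Submodule.inner_left_of_mem_orthogonal (Submodule.subset_span (Set.mem_range_self n)) hx
  have : A * ‖x‖ ^ 2 ≤ 0 := by simpa [horth] using (hF x).1
  simpa using nonpos_of_mul_nonpos_right this hA

end Frame

/-- If `(T₁,f₁)` and `(T₂,f₂)` (with `T₁, T₂` bounded and bijective) are similar via the
bounded bijective operator `V`, then `(T₁ⁿf₁)_{n∈ℤ}` is a frame for `H₁` iff
`(T₂ⁿf₂)_{n∈ℤ}` is a frame for `H₂`; in the affirmative case `V` is the unique such
intertwiner. -/
theorem similar_pairs_frame_iff_int
    {H₁ H₂ : Type*} [NormedAddCommGroup H₁] [InnerProductSpace ℂ H₁] [CompleteSpace H₁]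
    [NormedAddCommGroup H₂] [InnerProductSpace ℂ H₂] [CompleteSpace H₂]
    (T₁ : H₁ ≃L[ℂ] H₁) (T₂ : H₂ ≃L[ℂ] H₂) (f₁ : H₁) (f₂ : H₂)
    (V : H₁ ≃L[ℂ] H₂) (hV : ∀ x : H₁, T₂ (V x) = V (T₁ x)) (hf : f₂ = V f₁) :
    ((IsFrame fun n : ℤ => (T₁ ^ n) f₁) ↔ (IsFrame fun n : ℤ => (T₂ ^ n) f₂)) ∧
    ((IsFrame fun n : ℤ => (T₁ ^ n) f₁) →
      ∀ W : H₁ ≃L[ℂ] H₂, (∀ x : H₁, T₂ (W x) = W (T₁ x)) → f₂ = W f₁ → W = V) := by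
  have horbit : ∀ W : H₁ ≃L[ℂ] H₂, (∀ x, T₂ (W x) = W (T₁ x)) → f₂ = W f₁ →
      (fun n : ℤ => (T₂ ^ n) f₂) = fun n => W ((T₁ ^ n) f₁) := fun W hW hfW => by
    ext1 n
    rw [hfW, ContinuousLinearEquiv.zpow_apply_of_intertwines hW]
  refine ⟨⟨fun h => ?_, fun h => ?_⟩, fun h W hW hfW => ?_⟩
  · simpa [horbit V hV hf] using h.map V
  · rw [horbit V hV hf] at h
    simpa using h.map V.symm
  · refine ContinuousLinearEquiv.coe_injective (ext_on h.dense_span ?_)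
    rintro _ ⟨n, rfl⟩
    exact congrFun ((horbit W hW hfW).symm.trans (horbit V hV hf)) n
end
end

section
/- Let H be a complex separable infinite-dimensional Hilbert space, T a bounded bijective linear operator on H, and f₀ ∈ H. Then (Tⁿf₀)_{n∈ℤ} is a Riesz basis for H if and only if (T, f₀) is similar to (M_𝕋, 1_𝕋), where M_𝕋 is multiplication by the free variable z on L²(𝕋) and 1_𝕋 is the constant function 1. -/
open MeasureTheory AddCircle
noncomputable section

instance : Fact ((0:ℝ) < 1) := ⟨one_pos⟩

section MulCLM

variable {α : Type*} [MeasurableSpace α] {μ : Measure α}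

theorem memℒp_mul_of_ae_bound (φ : α → ℂ) (hm : AEStronglyMeasurable φ μ)
    (hb : ∀ᵐ x ∂μ, ‖φ x‖ ≤ 1) (f : Lp ℂ 2 μ) : MemLp (fun x => φ x * f x) 2 μ := by
  refine MemLp.of_le (Lp.memLp f) (hm.mul (Lp.aestronglyMeasurable f)) ?_
  filter_upwards [hb] with x hx
  calc ‖φ x * f x‖ = ‖φ x‖ * ‖f x‖ := norm_mul _ _
  _ ≤ 1 * ‖f x‖ := by gcongr
  _ = ‖f x‖ := one_mul _

/-- Multiplication by a measurable function bounded by `1` a.e., as a bounded operator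
on `L²(μ)`. -/
def mulCLM (φ : α → ℂ) (hm : AEStronglyMeasurable φ μ) (hb : ∀ᵐ x ∂μ, ‖φ x‖ ≤ 1) :
    Lp ℂ 2 μ →L[ℂ] Lp ℂ 2 μ := by
  refine LinearMap.mkContinuous
    { toFun := fun f => (memℒp_mul_of_ae_bound φ hm hb f).toLp (fun x => φ x * f x)
      map_add' := ?_
      map_smul' := ?_ } 1 ?_
  · intro f g
    refine Lp.ext ?_
    filter_upwards [MemLp.coeFn_toLp (memℒp_mul_of_ae_bound φ hm hb (f + g)),
      MemLp.coeFn_toLp (memℒp_mul_of_ae_bound φ hm hb f),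
      MemLp.coeFn_toLp (memℒp_mul_of_ae_bound φ hm hb g),
      Lp.coeFn_add f g,
      Lp.coeFn_add ((memℒp_mul_of_ae_bound φ hm hb f).toLp _)
        ((memℒp_mul_of_ae_bound φ hm hb g).toLp _)] with x h1 h2 h3 h4 h5
    rw [h1, h5]
    simp only [Pi.add_apply, h2, h3, h4]
    ring
  · intro c f
    refine Lp.ext ?_
    filter_upwards [MemLp.coeFn_toLp (memℒp_mul_of_ae_bound φ hm hb (c • f)),
      MemLp.coeFn_toLp (memℒp_mul_of_ae_bound φ hm hb f), Lp.coeFn_smul c f,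
      Lp.coeFn_smul c ((memℒp_mul_of_ae_bound φ hm hb f).toLp _)] with x h1 h2 h3 h4
    simp only [RingHom.id_apply]
    rw [h1, h4]
    simp only [Pi.smul_apply, h2, h3, smul_eq_mul]
    ring
  · intro f
    simp only [LinearMap.coe_mk, AddHom.coe_mk, one_mul]
    rw [Lp.norm_toLp, Lp.norm_def]
    refine ENNReal.toReal_mono (Lp.eLpNorm_ne_top f) ?_
    refine eLpNorm_mono_ae ?_
    filter_upwards [hb] with x hx
    calc ‖φ x * f x‖ = ‖φ x‖ * ‖f x‖ := norm_mul _ _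
    _ ≤ 1 * ‖f x‖ := by gcongr
    _ = ‖f x‖ := one_mul _

end MulCLM

lemma norm_fourier_apply (n : ℤ) (x : UnitAddCircle) : ‖fourier n x‖ = 1 := by
  rw [fourier_apply]
  exact Circle.norm_coe _

/-- `L²(σ)` for a subset `σ` of the circle: the `L²`-space of the normalized arc-length
(Haar) measure restricted to `σ`. -/
abbrev L2c (σ : Set UnitAddCircle) :=
  Lp ℂ 2 ((haarAddCircle : Measure UnitAddCircle).restrict σ)

/-- The unitary operator `M_σ` of multiplication by the free variable `z` on `L²(σ)`. -/
def Msigma (σ : Set UnitAddCircle) : L2c σ →L[ℂ] L2c σ :=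
  mulCLM (⇑(fourier 1)) ((map_continuous (fourier 1)).aestronglyMeasurable)
    (Filter.Eventually.of_forall fun x => le_of_eq (norm_fourier_apply 1 x))

/-- The constant function `1` in `L²(σ)`. -/
def oneSigma (σ : Set UnitAddCircle) : L2c σ := (memLp_const (1 : ℂ)).toLp _

/-- The full `L²` space of the circle (normalized arc-length measure). -/
abbrev L2T := Lp ℂ 2 (haarAddCircle : Measure UnitAddCircle)

/-- The unitary operator `M_𝕋` of multiplication by the free variable `z` on `L²(𝕋)`. -/
def MT : L2T →L[ℂ] L2T :=
  mulCLM (⇑(fourier 1)) ((map_continuous (fourier 1)).aestronglyMeasurable)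
    (Filter.Eventually.of_forall fun x => le_of_eq (norm_fourier_apply 1 x))

/-- The constant function `1` in `L²(𝕋)`. -/
def oneT : L2T := (memLp_const (1 : ℂ)).toLp _

/-- `(F n)` is a Riesz basis: the image of an orthonormal basis under a bounded
bijective operator. -/
def IsRieszBasis {I H : Type*} [NormedAddCommGroup H] [InnerProductSpace ℂ H] (F : I → H) : Prop :=
  ∃ (e : HilbertBasis I ℂ H) (V : H ≃L[ℂ] H), ∀ n, F n = V (e n)

/-!
The Fourier basis `(zⁿ)_{n∈ℤ}` is an orthonormal basis of `L²(𝕋)` on which `M_𝕋` acts as the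
bilateral shift `zⁿ ↦ zⁿ⁺¹`, and `1_𝕋 = z⁰`. So an isomorphism `V : L²(𝕋) → H` maps `zⁿ` to `Tⁿf₀`
for every `n` exactly when it intertwines `M_𝕋` with `T` and maps `1_𝕋` to `f₀`. On the other hand
`(Tⁿf₀)` is a Riesz basis exactly when some such `V` maps the Fourier basis onto it: `H`, being
separable and infinite-dimensional, has an orthonormal basis indexed by `ℤ`, and any two
orthonormal bases with the same index set are related by a unitary.
-/

section HilbertBasis

variable {ι 𝕜 E F : Type*} [RCLike 𝕜] [NormedAddCommGroup E] [InnerProductSpace 𝕜 E]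

theorem Orthonormal.dist_eq_sqrt_two {v : ι → E} (hv : Orthonormal 𝕜 v) {i j : ι} (hij : i ≠ j) :
    dist (v i) (v j) = √2 := by
  have hsq : ‖v i - v j‖ ^ 2 = 2 := by
    rw [@norm_sub_sq 𝕜, hv.1 i, hv.1 j, hv.inner_eq_zero hij]
    norm_num
  rw [dist_eq_norm, ← hsq, Real.sqrt_sq (norm_nonneg _)]

theorem Orthonormal.countable [TopologicalSpace.SeparableSpace E] {v : ι → E}
    (hv : Orthonormal 𝕜 v) : Countable ι := by
  refine Pairwise.countable_of_isOpen_disjoint (s := fun i => Metric.ball (v i) (1 / 2))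
    (fun i j hij => Metric.ball_disjoint_ball ?_) (fun _ => Metric.isOpen_ball)
    (fun _ => Metric.nonempty_ball.2 (by norm_num))
  rw [hv.dist_eq_sqrt_two hij, Real.le_sqrt (by norm_num) (by norm_num)]
  norm_num

theorem HilbertBasis.finiteDimensional [CompleteSpace E] [Finite ι] (b : HilbertBasis ι 𝕜 E) :
    FiniteDimensional 𝕜 E := by
  have := Fintype.ofFinite ι
  exact Module.Finite.of_basis b.toOrthonormalBasis.toBasis

def HilbertBasis.reindex [CompleteSpace E] {ι' : Type*} (b : HilbertBasis ι 𝕜 E) (e : ι ≃ ι') :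
    HilbertBasis ι' 𝕜 E :=
  HilbertBasis.mk (b.orthonormal.comp e.symm e.symm.injective) <| by
    rw [Set.range_comp, e.symm.range_eq_univ, Set.image_univ, b.dense_span]

theorem nonempty_hilbertBasis_int [CompleteSpace E] [TopologicalSpace.SeparableSpace E]
    (hE : ¬ FiniteDimensional 𝕜 E) : Nonempty (HilbertBasis ℤ 𝕜 E) := by
  obtain ⟨w, b, -⟩ := exists_hilbertBasis 𝕜 E
  have := b.orthonormal.countable
  have : Infinite w := ⟨fun _ => hE b.finiteDimensional⟩
  obtain ⟨_⟩ := nonempty_denumerable w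
  exact ⟨b.reindex ((Denumerable.eqv w).trans (Denumerable.eqv ℤ).symm)⟩

theorem HilbertBasis.ext_continuousLinearMap [NormedAddCommGroup F] [NormedSpace 𝕜 F]
    (b : HilbertBasis ι 𝕜 E) {f g : E →L[𝕜] F} (h : ∀ i, f (b i) = g (b i)) : f = g :=
  ContinuousLinearMap.ext_on (Submodule.dense_iff_topologicalClosure_eq_top.2 b.dense_span)
    (Set.forall_mem_range.2 h)

theorem HilbertBasis.repr_trans_repr_symm_apply [NormedAddCommGroup F] [InnerProductSpace 𝕜 F]
    (b : HilbertBasis ι 𝕜 E) (e : HilbertBasis ι 𝕜 F) (i : ι) :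
    (b.repr.trans e.repr.symm) (b i) = e i := by
  classical
  rw [LinearIsometryEquiv.trans_apply, b.repr_self, e.repr_symm_single]

end HilbertBasis

theorem isRieszBasis_iff_exists_equiv {I H K : Type*} [NormedAddCommGroup H]
    [InnerProductSpace ℂ H] [NormedAddCommGroup K] [InnerProductSpace ℂ K]
    [Nonempty (HilbertBasis I ℂ H)] (b : HilbertBasis I ℂ K) (F : I → H) :
    IsRieszBasis F ↔ ∃ W : K ≃L[ℂ] H, ∀ i, F i = W (b i) := by
  constructor
  · rintro ⟨e, V, hV⟩
    refine ⟨(b.repr.trans e.repr.symm).toContinuousLinearEquiv.trans V, fun i => ?_⟩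
    rw [hV, ContinuousLinearEquiv.trans_apply, LinearIsometryEquiv.coe_toContinuousLinearEquiv,
      b.repr_trans_repr_symm_apply]
  · rintro ⟨W, hW⟩
    obtain ⟨e⟩ := ‹Nonempty (HilbertBasis I ℂ H)›
    refine ⟨e, (e.repr.trans b.repr.symm).toContinuousLinearEquiv.trans W, fun i => ?_⟩
    rw [hW, ContinuousLinearEquiv.trans_apply, LinearIsometryEquiv.coe_toContinuousLinearEquiv,
      e.repr_trans_repr_symm_apply]

theorem ContinuousLinearEquiv.zpow_add_one_apply {R M : Type*} [Semiring R] [TopologicalSpace M]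
    [AddCommMonoid M] [Module R M] (T : M ≃L[R] M) (n : ℤ) (x : M) :
    (T ^ (n + 1)) x = T ((T ^ n) x) := by
  rw [add_comm, zpow_one_add]
  rfl

section Orbit

variable {K H : Type*} [NormedAddCommGroup H] [NormedSpace ℂ H]
  [NormedAddCommGroup K] [InnerProductSpace ℂ K]

theorem zpow_apply_eq_iff_intertwines_shift (b : HilbertBasis ℤ ℂ K) {S : K →L[ℂ] K}
    (hS : ∀ n, S (b n) = b (n + 1)) (W : K →L[ℂ] H) (T : H ≃L[ℂ] H) (f₀ : H) :
    (∀ n : ℤ, (T ^ n) f₀ = W (b n)) ↔ (∀ g, T (W g) = W (S g)) ∧ f₀ = W (b 0) := by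
  constructor
  · intro h
    refine ⟨fun g => ?_, by rw [← h 0, zpow_zero]; rfl⟩
    have hTW : (T : H →L[ℂ] H).comp W = W.comp S := b.ext_continuousLinearMap fun n => by
      simp only [ContinuousLinearMap.comp_apply, ContinuousLinearEquiv.coe_coe, hS, ← h,
        T.zpow_add_one_apply]
    exact congr($hTW g)
  · rintro ⟨hTW, rfl⟩ n
    induction n using Int.induction_on with
    | zero => rw [zpow_zero]; rfl
    | succ n ih => rw [T.zpow_add_one_apply, ih, hTW, hS]
    | pred n ih =>
      rw [← T.injective.eq_iff, ← T.zpow_add_one_apply, sub_add_cancel, ih, hTW, hS,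
        sub_add_cancel]

end Orbit

theorem coeFn_MT (f : L2T) : MT f =ᵐ[haarAddCircle] fun x => fourier 1 x * f x :=
  MemLp.coeFn_toLp (memℒp_mul_of_ae_bound _ (map_continuous (fourier 1)).aestronglyMeasurable
    (.of_forall fun x => (norm_fourier_apply 1 x).le) f)

theorem MT_fourierLp (n : ℤ) : MT (fourierLp 2 n) = fourierLp 2 (n + 1) := by
  refine Lp.ext ?_
  filter_upwards [coeFn_MT (fourierLp 2 n), coeFn_fourierLp 2 n, coeFn_fourierLp 2 (n + 1)]
    with x hMT hn hn1
  rw [hMT, hn1, hn, ← fourier_add, add_comm]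

theorem oneT_eq_fourierLp_zero : oneT = fourierLp 2 0 := by
  refine Lp.ext ?_
  filter_upwards [MemLp.coeFn_toLp (memLp_const (1 : ℂ)), coeFn_fourierLp 2 (0 : ℤ)] with x h1 h0
  rw [oneT, h1, h0, fourier_zero]

/-- For a bounded bijective operator `T` on `H` and `f₀ ∈ H`, the bi-infinite orbit
`(Tⁿf₀)_{n∈ℤ}` is a Riesz basis for `H` iff `(T, f₀)` is similar to `(M_𝕋, 1_𝕋)`. -/
theorem biinfinite_orbit_riesz_basis_iff_similar_to_MT
    {H : Type*} [NormedAddCommGroup H] [InnerProductSpace ℂ H] [CompleteSpace H]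
    [TopologicalSpace.SeparableSpace H] (hdim : ¬ FiniteDimensional ℂ H)
    (T : H ≃L[ℂ] H) (f₀ : H) :
    (IsRieszBasis fun n : ℤ => (T ^ n) f₀) ↔
      ∃ V : L2T ≃L[ℂ] H, (∀ g : L2T, T (V g) = V (MT g)) ∧ f₀ = V oneT := by
  have := nonempty_hilbertBasis_int hdim
  rw [isRieszBasis_iff_exists_equiv (fourierBasis (T := 1))]
  refine exists_congr fun V => ?_
  have hMT : ∀ n, MT (fourierBasis n) = fourierBasis (n + 1) := by
    simpa only [coe_fourierBasis] using MT_fourierLp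
  rw [oneT_eq_fourierLp_zero, ← coe_fourierBasis]
  exact zpow_apply_eq_iff_intertwines_shift fourierBasis hMT V T f₀
end
end

section
/- Let σ₁ and σ₂ be Borel subsets of the unit circle 𝕋. If there exists a bounded bijective linear operator V : L²(σ₁) → L²(σ₂) with M_{σ₂} = V M_{σ₁} V⁻¹, then the symmetric difference σ₁ Δ σ₂ has arc-length measure zero. -/
open MeasureTheory AddCircle
noncomputable section

/-!
An operator `V` with `V M_{σ₁} = M_{σ₂} V` also intertwines multiplication by every trigonometric
polynomial, hence, by uniform density, multiplication by every continuous function `φ`. Applying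
`V⁻¹` to `V (φ · 1) = φ · V 1` gives `∫_{σ₁} |φ|² ≤ ‖V⁻¹‖² ∫_{σ₂} |φ|² |V 1|²`. Finite Borel
measures on the circle are compared on closed sets by continuous functions and are inner regular,
so arc length on `σ₁` is dominated by a measure carried by `σ₂`: `|σ₁ \ σ₂| = 0`. The same
argument for `V⁻¹` gives `|σ₂ \ σ₁| = 0`.
-/

open Filter Function
open scoped ENNReal NNReal BoundedContinuousFunction

theorem MeasureTheory.Lp.lintegral_enorm_sq {α E : Type*} [MeasurableSpace α] {μ : Measure α}
    [NormedAddCommGroup E] (f : Lp E 2 μ) : ∫⁻ x, ‖f x‖ₑ ^ 2 ∂μ = ‖f‖ₑ ^ 2 := by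
  have h := eLpNorm_nnreal_pow_eq_lintegral (f := ⇑f) (μ := μ) (p := 2) two_ne_zero
  simp only [NNReal.coe_ofNat, ENNReal.rpow_ofNat, ENNReal.coe_ofNat] at h
  rw [Lp.enorm_def, h]

instance MeasureTheory.Lp.isFiniteMeasure_withDensity_enorm_sq {α E : Type*} [MeasurableSpace α]
    {μ : Measure α} [NormedAddCommGroup E] (f : Lp E 2 μ) :
    IsFiniteMeasure (μ.withDensity fun x => ‖f x‖ₑ ^ 2) :=
  isFiniteMeasure_withDensity (by rw [Lp.lintegral_enorm_sq]; finiteness)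

section MulOperator

variable {X : Type*} [TopologicalSpace X] [CompactSpace X] [MeasurableSpace X] [BorelSpace X]
  (μ : Measure X) [IsFiniteMeasure μ]

def mulOperator : C(X, ℂ) →L[ℂ] Lp ℂ 2 μ →L[ℂ] Lp ℂ 2 μ :=
  (ContinuousLinearMap.mul ℂ ℂ).holderL μ ∞ 2 2 ∘L ContinuousMap.toLp ∞ μ ℂ

variable {μ}

theorem mulOperator_apply_ae (φ : C(X, ℂ)) (f : Lp ℂ 2 μ) :
    mulOperator μ φ f =ᵐ[μ] fun x => φ x * f x := by
  filter_upwards [(ContinuousLinearMap.mul ℂ ℂ).coeFn_holder (r := 2)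
    (ContinuousMap.toLp ∞ μ ℂ φ) f, ContinuousMap.coeFn_toLp (p := ∞) (𝕜 := ℂ) μ φ] with x h1 h2
  rw [← h2]
  exact h1

theorem mulOperator_mul (φ ψ : C(X, ℂ)) :
    mulOperator μ (φ * ψ) = mulOperator μ φ ∘L mulOperator μ ψ := by
  ext1 f
  refine Lp.ext ?_
  filter_upwards [mulOperator_apply_ae (φ * ψ) f, mulOperator_apply_ae φ (mulOperator μ ψ f),
    mulOperator_apply_ae ψ f] with x h1 h2 h3
  simp [h1, h2, h3, mul_assoc]

theorem mulOperator_one : mulOperator μ (1 : C(X, ℂ)) = ContinuousLinearMap.id ℂ _ := by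
  ext1 f
  refine Lp.ext ?_
  filter_upwards [mulOperator_apply_ae 1 f] with x h
  simp [h]

theorem enorm_mulOperator_sq (φ : C(X, ℂ)) (f : Lp ℂ 2 μ) :
    ‖mulOperator μ φ f‖ₑ ^ 2 = ∫⁻ x, ‖φ x‖ₑ ^ 2 ∂μ.withDensity (fun x => ‖f x‖ₑ ^ 2) := by
  rw [← Lp.lintegral_enorm_sq, lintegral_withDensity_eq_lintegral_mul₀ (by fun_prop) (by fun_prop)]
  refine lintegral_congr_ae ?_
  filter_upwards [mulOperator_apply_ae φ f] with x hx
  simp [hx, mul_pow, mul_comm]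

end MulOperator

section Fourier

variable {T : ℝ} [Fact (0 < T)]

theorem mulOperator_fourier_add (μ : Measure (AddCircle T)) [IsFiniteMeasure μ] (m n : ℤ)
    (f : Lp ℂ 2 μ) :
    mulOperator μ (fourier m) (mulOperator μ (fourier n) f) = mulOperator μ (fourier (m + n)) f := by
  have h : fourier (m + n) = (fourier m * fourier n : C(AddCircle T, ℂ)) := by
    ext x
    exact fourier_add
  rw [h, mulOperator_mul, ContinuousLinearMap.comp_apply]

theorem mulOperator_fourier_zero (μ : Measure (AddCircle T)) [IsFiniteMeasure μ]
    (f : Lp ℂ 2 μ) : mulOperator μ (fourier 0) f = f := by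
  have h : fourier 0 = (1 : C(AddCircle T, ℂ)) := by
    ext x
    exact fourier_zero
  rw [h, mulOperator_one, ContinuousLinearMap.id_apply]

variable {μ₁ μ₂ : Measure (AddCircle T)} [IsFiniteMeasure μ₁] [IsFiniteMeasure μ₂]

theorem semiconj_mulOperator_fourier (V : Lp ℂ 2 μ₁ →L[ℂ] Lp ℂ 2 μ₂)
    (hV : Semiconj V (mulOperator μ₁ (fourier 1)) (mulOperator μ₂ (fourier 1))) (n : ℤ) :
    Semiconj V (mulOperator μ₁ (fourier n)) (mulOperator μ₂ (fourier n)) := by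
  have hneg : Semiconj V (mulOperator μ₁ (fourier (-1))) (mulOperator μ₂ (fourier (-1))) :=
    hV.inverses_right
      (fun f => by rw [mulOperator_fourier_add, add_neg_cancel, mulOperator_fourier_zero])
      (fun f => by rw [mulOperator_fourier_add, neg_add_cancel, mulOperator_fourier_zero])
  induction n using Int.induction_on with
  | zero => exact fun f => by simp only [mulOperator_fourier_zero]
  | succ n ih =>
    intro f
    rw [add_comm, ← mulOperator_fourier_add, ← mulOperator_fourier_add]
    exact hV.comp_right ih f
  | pred n ih =>
    intro f
    rw [sub_eq_neg_add, ← mulOperator_fourier_add, ← mulOperator_fourier_add]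
    exact hneg.comp_right ih f

theorem semiconj_mulOperator (V : Lp ℂ 2 μ₁ →L[ℂ] Lp ℂ 2 μ₂)
    (hV : Semiconj V (mulOperator μ₁ (fourier 1)) (mulOperator μ₂ (fourier 1)))
    (φ : C(AddCircle T, ℂ)) : Semiconj V (mulOperator μ₁ φ) (mulOperator μ₂ φ) := by
  have hdense : Dense (Submodule.span ℂ (Set.range (fourier (T := T))) : Set C(AddCircle T, ℂ)) :=
    Submodule.dense_iff_topologicalClosure_eq_top.mpr span_fourier_closure_eq_top
  have h : ContinuousLinearMap.compL ℂ _ _ _ V ∘L mulOperator μ₁ =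
      (ContinuousLinearMap.compL ℂ _ _ _).flip V ∘L mulOperator μ₂ := by
    refine ContinuousLinearMap.ext_on hdense ?_
    rintro _ ⟨n, rfl⟩
    ext1 f
    exact semiconj_mulOperator_fourier V hV n f
  exact fun f => congrArg (· f) (congrArg (· φ) h)

end Fourier

section MeasureComparison

variable {Ω : Type*} [MeasurableSpace Ω] [TopologicalSpace Ω]

theorem MeasureTheory.measure_isClosed_le_of_forall_lintegral_le [HasOuterApproxClosed Ω]
    [OpensMeasurableSpace Ω] {μ ν : Measure Ω} [IsFiniteMeasure ν]
    (h : ∀ f : Ω →ᵇ ℝ≥0, ∫⁻ x, f x ∂μ ≤ ∫⁻ x, f x ∂ν) {F : Set Ω} (hF : IsClosed F) :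
    μ F ≤ ν F :=
  ge_of_tendsto (HasOuterApproxClosed.tendsto_lintegral_apprSeq hF ν)
    (Eventually.of_forall fun n => (HasOuterApproxClosed.measure_le_lintegral hF μ n).trans (h _))

theorem MeasureTheory.Measure.le_of_forall_lintegral_le [TopologicalSpace.PseudoMetrizableSpace Ω]
    [BorelSpace Ω] {μ ν : Measure Ω} [IsFiniteMeasure μ] [IsFiniteMeasure ν]
    (h : ∀ f : Ω →ᵇ ℝ≥0, ∫⁻ x, f x ∂μ ≤ ∫⁻ x, f x ∂ν) : μ ≤ ν := by
  refine Measure.le_iff.2 fun s hs => ENNReal.le_of_forall_pos_le_add fun ε hε _ => ?_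
  obtain ⟨K, hKs, hK, hlt⟩ :=
    hs.exists_isClosed_lt_add (measure_ne_top μ s) (ENNReal.coe_ne_zero.2 hε.ne')
  calc μ s ≤ μ K + ε := hlt.le
    _ ≤ ν s + ε := add_le_add_left
      ((measure_isClosed_le_of_forall_lintegral_le h hK).trans (measure_mono hKs)) _

end MeasureComparison

theorem withDensity_le_smul_withDensity_of_semiconj {X : Type*} [TopologicalSpace X]
    [CompactSpace X] [TopologicalSpace.PseudoMetrizableSpace X] [MeasurableSpace X]
    [BorelSpace X] {μ₁ μ₂ : Measure X} [IsFiniteMeasure μ₁] [IsFiniteMeasure μ₂]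
    (V : Lp ℂ 2 μ₁ ≃L[ℂ] Lp ℂ 2 μ₂)
    (hV : ∀ φ : C(X, ℂ), Semiconj V (mulOperator μ₁ φ) (mulOperator μ₂ φ))
    (f : Lp ℂ 2 μ₁) :
    μ₁.withDensity (fun x => ‖f x‖ₑ ^ 2) ≤
      (‖(V.symm : Lp ℂ 2 μ₂ →L[ℂ] Lp ℂ 2 μ₁)‖₊ ^ 2) • μ₂.withDensity (fun x => ‖V f x‖ₑ ^ 2) := by
  refine Measure.le_of_forall_lintegral_le fun h => ?_
  let φ : C(X, ℂ) := ⟨fun x => ((NNReal.sqrt (h x) : ℝ) : ℂ), by fun_prop⟩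
  have hφ : ∀ x, ‖φ x‖ₑ ^ 2 = h x := fun x => by
    rw [enorm_eq_nnnorm, ← ENNReal.coe_pow, ENNReal.coe_inj]
    simp only [φ, ContinuousMap.coe_mk, Complex.nnnorm_real, NNReal.nnnorm_eq, NNReal.sq_sqrt]
  simp_rw [← hφ]
  rw [lintegral_smul_measure, ← enorm_mulOperator_sq, ← enorm_mulOperator_sq,
    ← V.symm_apply_apply (mulOperator μ₁ φ f), hV φ f]
  calc ‖V.symm (mulOperator μ₂ φ (V f))‖ₑ ^ 2
      ≤ (‖(V.symm : Lp ℂ 2 μ₂ →L[ℂ] Lp ℂ 2 μ₁)‖₊ * ‖mulOperator μ₂ φ (V f)‖ₑ) ^ 2 := by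
        gcongr
        exact ContinuousLinearMap.le_opENorm _ _
    _ = _ := by rw [mul_pow]; rfl

theorem mulCLM_apply_ae {α : Type*} [MeasurableSpace α] {μ : Measure α} (φ : α → ℂ)
    (hm : AEStronglyMeasurable φ μ) (hb : ∀ᵐ x ∂μ, ‖φ x‖ ≤ 1) (f : Lp ℂ 2 μ) :
    mulCLM φ hm hb f =ᵐ[μ] fun x => φ x * f x :=
  MemLp.coeFn_toLp (memℒp_mul_of_ae_bound φ hm hb f)

theorem Msigma_eq_mulOperator (σ : Set UnitAddCircle) : Msigma σ = mulOperator _ (fourier 1) := by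
  ext1 f
  refine Lp.ext ?_
  filter_upwards [mulOperator_apply_ae (fourier 1) f, mulCLM_apply_ae _ _ _ f] with x h1 h2
  exact h2.trans h1.symm

theorem measure_diff_eq_zero_of_semiconj {σ₁ σ₂ : Set UnitAddCircle} (hσ₂ : MeasurableSet σ₂)
    (V : L2c σ₁ ≃L[ℂ] L2c σ₂)
    (hV : ∀ φ : C(UnitAddCircle, ℂ), Semiconj V (mulOperator _ φ) (mulOperator _ φ)) :
    (haarAddCircle : Measure UnitAddCircle) (σ₁ \ σ₂) = 0 := by
  have hone : (haarAddCircle.restrict σ₁).withDensity (fun x => ‖oneSigma σ₁ x‖ₑ ^ 2) =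
      haarAddCircle.restrict σ₁ := by
    rw [withDensity_congr_ae (g := 1), withDensity_one]
    filter_upwards [MemLp.coeFn_toLp (memLp_const (1 : ℂ))] with x hx
    rw [oneSigma, hx]
    simp
  have hle := withDensity_le_smul_withDensity_of_semiconj V hV (oneSigma σ₁)
  rw [hone] at hle
  have hnull : haarAddCircle.restrict σ₂ (σ₁ \ σ₂) = 0 := by
    rw [Measure.restrict_apply' hσ₂, Set.sdiff_inter_self, measure_empty]
  refine nonpos_iff_eq_zero.1 ?_
  calc haarAddCircle (σ₁ \ σ₂) = haarAddCircle.restrict σ₁ (σ₁ \ σ₂) :=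
        (Measure.restrict_eq_self _ Set.sdiff_subset).symm
    _ ≤ _ := hle _
    _ = 0 := by rw [Measure.smul_apply, withDensity_absolutelyContinuous _ _ hnull, smul_zero]

/-- If the multiplication operators `M_{σ₁}` and `M_{σ₂}` are similar (via a bounded
bijective operator `V : L²(σ₁) → L²(σ₂)`), then the symmetric difference `σ₁ Δ σ₂`
has arc-length measure zero. -/
theorem measure_symmDiff_eq_zero_of_similar_multiplication
    (σ₁ σ₂ : Set UnitAddCircle) (hσ₁ : MeasurableSet σ₁) (hσ₂ : MeasurableSet σ₂)
    (V : L2c σ₁ ≃L[ℂ] L2c σ₂)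
    (hV : ∀ f : L2c σ₁, Msigma σ₂ (V f) = V (Msigma σ₁ f)) :
    (haarAddCircle : Measure UnitAddCircle) ((σ₁ \ σ₂) ∪ (σ₂ \ σ₁)) = 0 := by
  have hA : ∀ φ, Semiconj V (mulOperator _ φ) (mulOperator _ φ) :=
    semiconj_mulOperator (V : L2c σ₁ →L[ℂ] L2c σ₂) fun f => by
      simpa only [Msigma_eq_mulOperator, ContinuousLinearEquiv.coe_coe] using (hV f).symm
  exact measure_union_null (measure_diff_eq_zero_of_semiconj hσ₂ V hA)
    (measure_diff_eq_zero_of_semiconj hσ₁ V.symm fun φ =>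
      (hA φ).inverse_left V.symm_apply_apply V.apply_symm_apply)
end
end
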